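/- Let P = (51/500)·P₁ + (449/500)·P₂ where P₁ is uniform on [0, 7/15] and P₂ is uniform on [8/15, 1]. Then there exists an optimal set of two-means for P containing a point of the open interval (7/15, 8/15); indeed the optimal set of two-means is approximately {0.488570, 0.829523} with quantization error approximately 0.0179722. -/

import Mathlib

open MeasureTheory Set

noncomputable def unif (a b : ℝ) : Measure ℝ :=
  (ENNReal.ofReal (b - a))⁻¹ • (volume.restrict (Icc a b))

noncomputable def mix (p : ℝ) (P₁ P₂ : Measure ℝ) : Measure ℝ :=
  ENNReal.ofReal p • P₁ + ENNReal.ofReal (1 - p) • P₂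

noncomputable def distortion (P : Measure ℝ) (γ : Finset ℝ) : ℝ :=
  ∫ x, sInf ((fun c => (x - c) ^ 2) '' (γ : Set ℝ)) ∂P

noncomputable def quantErr (P : Measure ℝ) (n : ℕ) : ℝ :=
  sInf { v | ∃ γ : Finset ℝ, γ.Nonempty ∧ γ.card ≤ n ∧ v = distortion P γ }

def IsOptimal (P : Measure ℝ) (n : ℕ) (γ : Finset ℝ) : Prop :=
  γ.Nonempty ∧ γ.card ≤ n ∧ distortion P γ = quantErr P n

/-!
For a codebook `{a, b}` with `a ≤ b` the Voronoi cut is `m = (a + b) / 2`, and the error is a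
polynomial in `a`, `b` and the cut points of the two components. If `m ≤ 1/2` the cut lies in
`[0, 7/15]` (or in the gap), and completing the squares in `a` and `b` shows that the error is at
least `49/2700`, the error of the two component centroids `{7/30, 23/30}`. If `m ≥ 1/2` the cut
`t` lies in `[8/15, 1]`; completing the squares leaves a cubic in `t` with a double root at the
solution `m₀ ≈ 0.65905` of the centroid condition, which gives the codebook
`{a₀, b₀} ≈ {0.48857, 0.82952}` with error `≈ 0.017972 < 49/2700`, so it is optimal and `a₀` lies
in the gap `(7/15, 8/15)`.
-/

noncomputable def secondMoment (u v c : ℝ) : ℝ := ((v - c) ^ 3 - (u - c) ^ 3) / 3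

theorem integral_sub_sq (u v c : ℝ) : ∫ x in u..v, (x - c) ^ 2 = secondMoment u v c := by
  norm_num [intervalIntegral.integral_comp_sub_right (fun x => x ^ 2), secondMoment]

theorem integral_unif {a b : ℝ} (hab : a ≤ b) (f : ℝ → ℝ) :
    ∫ x, f x ∂unif a b = (b - a)⁻¹ * ∫ x in a..b, f x := by
  rw [unif, integral_smul_measure, integral_Icc_eq_integral_Ioc,
    ← intervalIntegral.integral_of_le hab, ENNReal.toReal_inv,
    ENNReal.toReal_ofReal (sub_nonneg.2 hab), smul_eq_mul]

theorem Continuous.integrable_unif {f : ℝ → ℝ} (hf : Continuous f) {a b : ℝ} (hab : a < b) :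
    Integrable f (unif a b) :=
  hf.integrableOn_Icc.smul_measure (by simpa using hab)

theorem integral_mix {p : ℝ} (hp₀ : 0 ≤ p) (hp₁ : p ≤ 1) {P₁ P₂ : Measure ℝ} {f : ℝ → ℝ}
    (h₁ : Integrable f P₁) (h₂ : Integrable f P₂) :
    ∫ x, f x ∂mix p P₁ P₂ = p * ∫ x, f x ∂P₁ + (1 - p) * ∫ x, f x ∂P₂ := by
  rw [mix, integral_add_measure (h₁.smul_measure ENNReal.ofReal_ne_top)
    (h₂.smul_measure ENNReal.ofReal_ne_top), integral_smul_measure, integral_smul_measure,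
    ENNReal.toReal_ofReal hp₀, ENNReal.toReal_ofReal (sub_nonneg.2 hp₁), smul_eq_mul, smul_eq_mul]

theorem distortion_pair (P : Measure ℝ) (a b : ℝ) :
    distortion P {a, b} = ∫ x, min ((x - a) ^ 2) ((x - b) ^ 2) ∂P := by
  simp only [distortion, Finset.coe_insert, Finset.coe_singleton, Set.image_pair, csInf_pair]

theorem Finset.exists_le_eq_pair_of_card_le_two {α : Type*} [LinearOrder α] {s : Finset α}
    (hs : s.Nonempty) (hcard : s.card ≤ 2) : ∃ a b, a ≤ b ∧ s = {a, b} := by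
  rcases hcard.lt_or_eq with hlt | htwo
  · obtain ⟨a, rfl⟩ := Finset.card_eq_one.1 (by have := hs.card_pos; omega : s.card = 1)
    exact ⟨a, a, le_rfl, by simp⟩
  · obtain ⟨x, y, -, rfl⟩ := Finset.card_eq_two.1 htwo
    rcases le_total x y with hxy | hyx
    · exact ⟨x, y, hxy, rfl⟩
    · exact ⟨y, x, hyx, Finset.pair_comm x y⟩

theorem isOptimal_of_forall_le {P : Measure ℝ} {n : ℕ} {γ : Finset ℝ} (hne : γ.Nonempty)
    (hcard : γ.card ≤ n)
    (hle : ∀ γ' : Finset ℝ, γ'.Nonempty → γ'.card ≤ n → distortion P γ ≤ distortion P γ') :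
    IsOptimal P n γ := by
  have hmem : distortion P γ ∈
      {v | ∃ γ' : Finset ℝ, γ'.Nonempty ∧ γ'.card ≤ n ∧ v = distortion P γ'} :=
    ⟨γ, hne, hcard, rfl⟩
  have hlow : distortion P γ ∈ lowerBounds
      {v | ∃ γ' : Finset ℝ, γ'.Nonempty ∧ γ'.card ≤ n ∧ v = distortion P γ'} := by
    rintro _ ⟨γ', hne', hcard', rfl⟩
    exact hle γ' hne' hcard'
  exact ⟨hne, hcard, le_antisymm (le_csInf ⟨_, hmem⟩ hlow) (csInf_le ⟨_, hlow⟩ hmem)⟩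

theorem min_sq_sub_eq_left {a b x : ℝ} (hab : a ≤ b) (hx : x ≤ (a + b) / 2) :
    min ((x - a) ^ 2) ((x - b) ^ 2) = (x - a) ^ 2 :=
  min_eq_left (by nlinarith)

theorem min_sq_sub_eq_right {a b x : ℝ} (hab : a ≤ b) (hx : (a + b) / 2 ≤ x) :
    min ((x - a) ^ 2) ((x - b) ^ 2) = (x - b) ^ 2 :=
  min_eq_right (by nlinarith)

theorem integral_min_sq_sub {a b u v : ℝ} (hab : a ≤ b) (huv : u ≤ v) :
    ∫ x in u..v, min ((x - a) ^ 2) ((x - b) ^ 2) =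
      secondMoment u (max u (min v ((a + b) / 2))) a +
        secondMoment (max u (min v ((a + b) / 2))) v b := by
  set t := max u (min v ((a + b) / 2))
  have hut : u ≤ t := le_max_left _ _
  have htv : t ≤ v := max_le huv (min_le_left _ _)
  have hcont : Continuous fun x : ℝ => min ((x - a) ^ 2) ((x - b) ^ 2) := by fun_prop
  rw [← intervalIntegral.integral_add_adjacent_intervals (hcont.intervalIntegrable u t)
    (hcont.intervalIntegrable t v), ← integral_sub_sq, ← integral_sub_sq]
  congr 1
  · refine intervalIntegral.integral_congr_ae (Filter.Eventually.of_forall fun x hx => ?_)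
    rw [Set.uIoc_of_le hut] at hx
    refine min_sq_sub_eq_left hab ?_
    rcases max_cases u (min v ((a + b) / 2)) with h | h <;>
      rcases min_cases v ((a + b) / 2) with h' | h' <;> linarith [hx.1, hx.2]
  · refine intervalIntegral.integral_congr_ae (Filter.Eventually.of_forall fun x hx => ?_)
    rw [Set.uIoc_of_le htv] at hx
    refine min_sq_sub_eq_right hab ?_
    rcases max_cases u (min v ((a + b) / 2)) with h | h <;>
      rcases min_cases v ((a + b) / 2) with h' | h' <;> linarith [hx.1, hx.2]

theorem integral_mix_unif {p a b c d : ℝ} (hp₀ : 0 ≤ p) (hp₁ : p ≤ 1) (hab : a < b) (hcd : c < d)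
    {f : ℝ → ℝ} (hf : Continuous f) :
    ∫ x, f x ∂mix p (unif a b) (unif c d) =
      p / (b - a) * (∫ x in a..b, f x) + (1 - p) / (d - c) * ∫ x in c..d, f x := by
  rw [integral_mix hp₀ hp₁ (hf.integrable_unif hab) (hf.integrable_unif hcd),
    integral_unif hab.le, integral_unif hcd.le]
  ring

local notation "P" => mix (51 / 500) (unif 0 (7 / 15)) (unif (8 / 15) 1)

/-- The cost of `{a, b}` when `[0, s]` and `[8/15, t]` are sent to `a` and `[s, 7/15]` and `[t, 1]`
to `b`; `153/700` and `1347/700` are the densities of `P` on its two components. -/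
noncomputable def splitCost (s t a b : ℝ) : ℝ :=
  153 / 700 * (secondMoment 0 s a + secondMoment s (7 / 15) b) +
    1347 / 700 * (secondMoment (8 / 15) t a + secondMoment t 1 b)

theorem distortion_pair_eq_splitCost {a b : ℝ} (hab : a ≤ b) :
    distortion P {a, b} =
      splitCost (max 0 (min (7 / 15) ((a + b) / 2))) (max (8 / 15) (min 1 ((a + b) / 2))) a b := by
  rw [distortion_pair, integral_mix_unif (by norm_num) (by norm_num) (by norm_num) (by norm_num)
    (by fun_prop), integral_min_sq_sub hab (by norm_num), integral_min_sq_sub hab (by norm_num),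
    splitCost]
  norm_num

-- `49/2700` is the cost of the component centroids `{7/30, 23/30}`.
theorem le_splitCost_of_cut_in_first {s : ℝ} (a b : ℝ) (hs₀ : 0 ≤ s) (hs₁ : s ≤ 7 / 15) :
    49 / 2700 ≤ splitCost s (8 / 15) a b := by
  set W := 153 / 700 * (7 / 15 - s) + 1347 / 700 * (7 / 15) with hW
  set S := 153 / 700 * ((7 / 15) ^ 2 - s ^ 2) / 2 + 1347 / 700 * (1 - (8 / 15) ^ 2) / 2 with hS
  have hW₀ : 0 < W := by linarith
  have key : W * (splitCost s (8 / 15) a b - 49 / 2700) =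
      W * (153 / 700 * s) * (a - s / 2) ^ 2 + (W * b - S) ^ 2 +
        (7 / 15 - s) * (153 / 2800 * (7 / 15 - s) ^ 2 + 138567 / 1750000 * (7 / 15 - s) +
          7633 / 1093750) := by
    simp only [splitCost, secondMoment, hW, hS]
    ring
  have hu : 0 ≤ 7 / 15 - s := by linarith
  rw [← sub_nonneg, ← mul_nonneg_iff_of_pos_left hW₀, key]
  exact add_nonneg
    (add_nonneg (mul_nonneg (mul_nonneg hW₀.le (mul_nonneg (by norm_num) hs₀)) (sq_nonneg _))
      (sq_nonneg _))
    (mul_nonneg hu (add_nonneg (add_nonneg (by positivity) (mul_nonneg (by norm_num) hu))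
      (by norm_num)))

-- `a₀` and `b₀` are the centroids of `P` on `[0, m₀]` and `[m₀, 1]`, and `m₀` is their midpoint.
noncomputable def m₀ : ℝ := (4110 + √108031) / 6735

noncomputable def a₀ : ℝ := (3 * m₀ - 1) / 2

noncomputable def b₀ : ℝ := (1 + m₀) / 2

theorem m₀_quadratic : 45360225 * m₀ ^ 2 - 55361700 * m₀ + 16784069 = 0 := by
  have h := Real.sq_sqrt (show (0 : ℝ) ≤ 108031 by norm_num)
  simp only [m₀]
  linear_combination h

theorem m₀_mem_Ioo : m₀ ∈ Ioo (329 / 500) (2 / 3) := by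
  have h₁ : (321.7 : ℝ) < √108031 := Real.lt_sqrt_of_sq_lt (by norm_num)
  have h₂ : √108031 < 380 := (Real.sqrt_lt' (by norm_num)).2 (by norm_num)
  constructor <;> simp only [m₀] <;> linarith

theorem a₀_mem_Ioo : a₀ ∈ Ioo (7 / 15 : ℝ) (8 / 15) := by
  obtain ⟨h₁, h₂⟩ := m₀_mem_Ioo
  constructor <;> simp only [a₀] <;> linarith

theorem splitCost_opt_le_of_cut_in_second {t : ℝ} (a b : ℝ) (ht₀ : 8 / 15 ≤ t) (ht₁ : t ≤ 1) :
    splitCost (7 / 15) m₀ a₀ b₀ ≤ splitCost (7 / 15) t a b := by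
  set W := 153 / 700 * (7 / 15) + 1347 / 700 * (t - 8 / 15) with hW
  set S := 153 / 700 * (7 / 15) ^ 2 / 2 + 1347 / 700 * (t ^ 2 - (8 / 15) ^ 2) / 2 with hS
  have hW₀ : 0 < W := by linarith
  -- after completing the squares, the remainder is a cubic in `t` with a double root at `m₀`
  have key : W * (splitCost (7 / 15) t a b - splitCost (7 / 15) m₀ a₀ b₀) =
      (W * a - S) ^ 2 + W * (1347 / 700 * (1 - t)) * (b - (1 + t) / 2) ^ 2 +
        (t - m₀) ^ 2 * (1347 / 2800 * t + 1347 / 1400 * m₀ - 1556683 / 1750000) := by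
    simp only [splitCost, secondMoment, a₀, b₀, hW, hS]
    linear_combination (-1 / 12250000 * t * m₀ + 1 / 12250000 * t + 99 / 5500250000 * m₀ -
      37381 / 1237556250000) * m₀_quadratic
  have hlin : 0 ≤ 1347 / 2800 * t + 1347 / 1400 * m₀ - 1556683 / 1750000 := by
    linarith [m₀_mem_Ioo.1]
  rw [← sub_nonneg, ← mul_nonneg_iff_of_pos_left hW₀, key]
  exact add_nonneg
    (add_nonneg (sq_nonneg _)
      (mul_nonneg (mul_nonneg hW₀.le (by linarith)) (sq_nonneg _)))
    (mul_nonneg (sq_nonneg _) hlin)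

theorem splitCost_opt_lt : splitCost (7 / 15) m₀ a₀ b₀ < 49 / 2700 :=
  (splitCost_opt_le_of_cut_in_second (t := 2 / 3) (1 / 2) (5 / 6) (by norm_num)
    (by norm_num)).trans_lt (by norm_num [splitCost, secondMoment])

theorem distortion_opt : distortion P {a₀, b₀} = splitCost (7 / 15) m₀ a₀ b₀ := by
  obtain ⟨h₁, h₂⟩ := m₀_mem_Ioo
  have hmid : (a₀ + b₀) / 2 = m₀ := by simp only [a₀, b₀]; ring
  rw [distortion_pair_eq_splitCost (by simp only [a₀, b₀]; linarith), hmid,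
    min_eq_left (by linarith), max_eq_right (by norm_num), min_eq_right (by linarith),
    max_eq_right (by linarith)]

theorem splitCost_opt_le_distortion {γ : Finset ℝ} (hne : γ.Nonempty) (hcard : γ.card ≤ 2) :
    splitCost (7 / 15) m₀ a₀ b₀ ≤ distortion P γ := by
  obtain ⟨a, b, hab, rfl⟩ := Finset.exists_le_eq_pair_of_card_le_two hne hcard
  rw [distortion_pair_eq_splitCost hab]
  rcases le_total ((a + b) / 2) (1 / 2) with hm | hm
  · rw [max_eq_left (min_le_of_right_le (hm.trans (by norm_num)) : min 1 ((a + b) / 2) ≤ 8 / 15)]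
    exact splitCost_opt_lt.le.trans
      (le_splitCost_of_cut_in_first a b (le_max_left _ _) (max_le (by norm_num) (min_le_left _ _)))
  · rw [min_eq_left (by linarith : (7 / 15 : ℝ) ≤ (a + b) / 2),
      max_eq_right (by norm_num : (0 : ℝ) ≤ 7 / 15)]
    exact splitCost_opt_le_of_cut_in_second a b (le_max_left _ _)
      (max_le (by norm_num) (min_le_left _ _))

theorem stmt16 :
    ∃ γ : Finset ℝ,
      IsOptimal (mix (51/500) (unif 0 (7/15)) (unif (8/15) 1)) 2 γ ∧
      ∃ c ∈ γ, c ∈ Ioo (7/15 : ℝ) (8/15) :=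
  ⟨{a₀, b₀}, isOptimal_of_forall_le (Finset.insert_nonempty _ _) Finset.card_le_two
      fun _ hne hcard => distortion_opt ▸ splitCost_opt_le_distortion hne hcard,
    a₀, Finset.mem_insert_self _ _, a₀_mem_Ioo⟩
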